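/- Let d ≥ 2, let g : ℝ^{d−1} → ℝ be twice continuously differentiable, and define the flattening map Φ : ℝ^d → ℝ^d by Φ(z₁,…,z_{d−1},z_d) = (z₁,…,z_{d−1}, z_d − g(z₁,…,z_{d−1})). Fix z ∈ ℝ^d, a drift vector μ ∈ ℝ^d and a symmetric diffusion matrix D ∈ ℝ^{d×d}, and write gᵢ and g_{ij} for the first and second partial derivatives of g evaluated at (z₁,…,z_{d−1}). Then for every twice continuously differentiable f : ℝ^d → ℝ, Σ_i μ_i ∂(f∘Φ)/∂z_i(z) + ½ Σ_{i,j} D_{ij} ∂²(f∘Φ)/∂z_i∂z_j(z) = Σ_i μ̂_i (∂f/∂z_i)(Φ(z)) + ½ Σ_{i,j} D̂_{ij} (∂²f/∂z_i∂z_j)(Φ(z)), where the transformed coefficients are μ̂_i = μ_i for i < d; μ̂_d = μ_d − Σ_{i<d} μ_i g_i − ½ Σ_{i,j<d} D_{ij} g_{ij}; D̂_{ij} = D_{ij} for i,j < d; D̂_{id} = D̂_{di} = D_{id} − Σ_{j<d} D_{ij} g_j for i < d; and D̂_{dd} = D_{dd} − 2 Σ_{i<d} D_{id} g_i + Σ_{i,j<d}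 D_{ij} g_i g_j. -/

import Mathlib

open Matrix

/-- Partial derivative of `f : ℝ^d → ℝ` in the `i`-th coordinate direction. -/
noncomputable def pd {d : ℕ} (f : (Fin d → ℝ) → ℝ) (i : Fin d) (z : Fin d → ℝ) : ℝ :=
  fderiv ℝ f z (Pi.single i 1)

/-- The flattening map `Φ(z₁,…,z_{d-1},z_d) = (z₁,…,z_{d-1}, z_d − g(z₁,…,z_{d-1}))`. -/
noncomputable def flatten {n : ℕ} (g : (Fin n → ℝ) → ℝ) (z : Fin (n + 1) → ℝ) :
    Fin (n + 1) → ℝ :=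
  Function.update z (Fin.last n) (z (Fin.last n) - g (Fin.init z))

/-- The transformed drift vector `μ̂`. -/
noncomputable def muHat {n : ℕ} (μ : Fin (n + 1) → ℝ) (D : Matrix (Fin (n + 1)) (Fin (n + 1)) ℝ)
    (g1 : Fin n → ℝ) (g2 : Fin n → Fin n → ℝ) : Fin (n + 1) → ℝ := fun i =>
  if i = Fin.last n then
    μ (Fin.last n) - (∑ j : Fin n, μ j.castSucc * g1 j)
      - (1 / 2) * ∑ j : Fin n, ∑ k : Fin n, D j.castSucc k.castSucc * g2 j k
  else μ i

/-- The transformed diffusion matrix `D̂`. -/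
noncomputable def DHat {n : ℕ} (D : Matrix (Fin (n + 1)) (Fin (n + 1)) ℝ)
    (g1 : Fin n → ℝ) : Matrix (Fin (n + 1)) (Fin (n + 1)) ℝ := fun i j =>
  if i = Fin.last n then
    if j = Fin.last n then
      D (Fin.last n) (Fin.last n) - 2 * (∑ k : Fin n, D k.castSucc (Fin.last n) * g1 k)
        + ∑ k : Fin n, ∑ l : Fin n, D k.castSucc l.castSucc * g1 k * g1 l
    else D j (Fin.last n) - ∑ k : Fin n, D j k.castSucc * g1 k
  else
    if j = Fin.last n then D i (Fin.last n) - ∑ k : Fin n, D i k.castSucc * g1 k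
    else D i j

/-!
Write `Φ = flatten g` as the shear `x ↦ x - G x • e` with `G = g ∘ init` and `e = e_d`. The chain
rule gives `D(f ∘ Φ) = Df ∘ A` with `A = I - e γᵀ`, `γ = (∇g, 0)`, and
`D²(f ∘ Φ)(u, v) = D²f(Au, Av) - D²G(u, v) ∂_d f`. Contracting with `μ` and `D`, the first-order
part is `Df(Aμ)` and the second-order part is `tr(A D Aᵀ D²f) - tr(D D²G) ∂_d f`. For symmetric `D`
one has `D̂ = A D Aᵀ`, and `μ̂ = Aμ - ½ tr(D D²G) e`.
-/

section SecondOrderChainRule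

variable {E F G : Type*} [NormedAddCommGroup E] [NormedSpace ℝ E] [NormedAddCommGroup F]
  [NormedSpace ℝ F] [NormedAddCommGroup G] [NormedSpace ℝ G]

theorem fderiv_fderiv_apply {h : E → F} {x : E} (hh : DifferentiableAt ℝ (fderiv ℝ h) x)
    (u v : E) : fderiv ℝ (fun y => fderiv ℝ h y v) x u = fderiv ℝ (fderiv ℝ h) x u v := by
  rw [fderiv_clm_apply hh (differentiableAt_const v)]
  simp

theorem ContDiff.differentiable_fderiv {h : E → F} (hh : ContDiff ℝ 2 h) :
    Differentiable ℝ (fderiv ℝ h) :=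
  (hh.fderiv_right (m := 1) le_rfl).differentiable one_ne_zero

theorem fderiv_fderiv_comp_apply {f : F → G} {Φ : E → F} (hf : ContDiff ℝ 2 f)
    (hΦ : ContDiff ℝ 2 Φ) (x u v : E) :
    fderiv ℝ (fderiv ℝ (f ∘ Φ)) x u v =
      fderiv ℝ (fderiv ℝ f) (Φ x) (fderiv ℝ Φ x u) (fderiv ℝ Φ x v)
        + fderiv ℝ f (Φ x) (fderiv ℝ (fderiv ℝ Φ) x u v) := by
  have hΦ1 := hΦ.differentiable two_ne_zero
  have hcomp : fderiv ℝ (f ∘ Φ) = fun y => (fderiv ℝ f (Φ y)).comp (fderiv ℝ Φ y) :=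
    funext fun y => fderiv_comp y (hf.differentiable two_ne_zero _) (hΦ1 y)
  have hf2 : DifferentiableAt ℝ (fun y => fderiv ℝ f (Φ y)) x :=
    (hf.differentiable_fderiv _).comp x (hΦ1 x)
  rw [hcomp, fderiv_clm_comp hf2 (hΦ.differentiable_fderiv x),
    fderiv_fun_comp x (hf.differentiable_fderiv _) (hΦ1 x)]
  simp [add_comm]

theorem fderiv_comp_clm_apply {f : F → G} {x : E} (L : E →L[ℝ] F)
    (hf : DifferentiableAt ℝ f (L x)) (v : E) : fderiv ℝ (f ∘ L) x v = fderiv ℝ f (L x) (L v) := by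
  rw [fderiv_comp x hf L.differentiableAt, L.fderiv]
  rfl

theorem fderiv_fderiv_comp_clm_apply {f : F → G} (hf : ContDiff ℝ 2 f) (L : E →L[ℝ] F)
    (x u v : E) : fderiv ℝ (fderiv ℝ (f ∘ L)) x u v = fderiv ℝ (fderiv ℝ f) (L x) (L u) (L v) := by
  have hL : fderiv ℝ L = fun _ => L := funext fun _ => L.fderiv
  simp [fderiv_fderiv_comp_apply hf L.contDiff, hL]

end SecondOrderChainRule

section Shear

variable {E F : Type*} [NormedAddCommGroup E] [NormedSpace ℝ E] [NormedAddCommGroup F]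
  [NormedSpace ℝ F]

def shear (G : E → ℝ) (e x : E) : E := x - G x • e

variable {G : E → ℝ} {e : E}

theorem ContDiff.shear {k : WithTop ℕ∞} (hG : ContDiff ℝ k G) : ContDiff ℝ k (shear G e) :=
  contDiff_id.sub (hG.smul contDiff_const)

theorem DifferentiableAt.shear {x : E} (hG : DifferentiableAt ℝ G x) :
    DifferentiableAt ℝ (shear G e) x :=
  differentiableAt_id.sub (hG.smul_const e)

theorem fderiv_shear_apply {x : E} (hG : DifferentiableAt ℝ G x) (v : E) :
    fderiv ℝ (shear G e) x v = v - fderiv ℝ G x v • e := by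
  unfold shear
  rw [fderiv_fun_sub differentiableAt_fun_id (hG.smul_const e), fderiv_smul_const hG]
  simp

theorem fderiv_fderiv_shear_apply (hG : ContDiff ℝ 2 G) (x u v : E) :
    fderiv ℝ (fderiv ℝ (shear G e)) x u v = -(fderiv ℝ (fderiv ℝ G) x u v • e) := by
  have hdir : (fun y => fderiv ℝ (shear G e) y v) = fun y => v - fderiv ℝ G y v • e :=
    funext fun y => fderiv_shear_apply (hG.differentiable two_ne_zero y) v
  have hGv : DifferentiableAt ℝ (fun y => fderiv ℝ G y v) x :=
    (hG.differentiable_fderiv x).clm_apply (differentiableAt_const v)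
  rw [← fderiv_fderiv_apply (hG.shear.differentiable_fderiv x), hdir,
    ← fderiv_fderiv_apply (hG.differentiable_fderiv x), fderiv_const_sub, fderiv_smul_const hGv]
  simp

theorem fderiv_comp_shear_apply {f : E → F} {x : E} (hf : DifferentiableAt ℝ f (shear G e x))
    (hG : DifferentiableAt ℝ G x) (v : E) :
    fderiv ℝ (f ∘ shear G e) x v = fderiv ℝ f (shear G e x) (v - fderiv ℝ G x v • e) := by
  rw [fderiv_comp x hf hG.shear, ContinuousLinearMap.comp_apply, fderiv_shear_apply hG]

theorem fderiv_fderiv_comp_shear_apply {f : E → F} (hf : ContDiff ℝ 2 f) (hG : ContDiff ℝ 2 G)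
    (x u v : E) :
    fderiv ℝ (fderiv ℝ (f ∘ shear G e)) x u v =
      fderiv ℝ (fderiv ℝ f) (shear G e x) (u - fderiv ℝ G x u • e) (v - fderiv ℝ G x v • e)
        - fderiv ℝ (fderiv ℝ G) x u v • fderiv ℝ f (shear G e x) e := by
  have hG1 := hG.differentiable two_ne_zero x
  rw [fderiv_fderiv_comp_apply hf hG.shear, fderiv_fderiv_shear_apply hG,
    fderiv_shear_apply hG1, fderiv_shear_apply hG1]
  simp [sub_eq_add_neg]

end Shear

section Contraction

variable {ι : Type*} [Fintype ι]

theorem Matrix.sum_sum_mul_apply_eq_trace {R : Type*} [NonUnitalNonAssocSemiring R]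
    (D N : Matrix ι ι R) :
    ∑ i, ∑ j, D i j * N j i = trace (D * N) := by
  simp [trace, mul_apply]

variable [DecidableEq ι]

theorem ContinuousLinearMap.sum_smul_apply_single {M : Type*} [AddCommMonoid M]
    [TopologicalSpace M] [Module ℝ M] (L : (ι → ℝ) →L[ℝ] M) (v : ι → ℝ) :
    ∑ i, v i • L (Pi.single i 1) = L v := by
  conv_rhs => rw [pi_eq_sum_univ' v]
  simp [map_sum, map_smul]

theorem ContinuousLinearMap.sum_smul_apply_mulVec_single {M : Type*} [AddCommMonoid M]
    [TopologicalSpace M] [Module ℝ M] (L : (ι → ℝ) →L[ℝ] M) (A : Matrix ι ι ℝ) (v : ι → ℝ) :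
    ∑ i, v i • L (A *ᵥ Pi.single i 1) = L (A *ᵥ v) := by
  conv_rhs => rw [pi_eq_sum_univ' v]
  simp [mulVec_sum, mulVec_smul, map_sum, map_smul]

theorem ContinuousLinearMap.apply_apply_eq_dotProduct_mulVec
    (B : (ι → ℝ) →L[ℝ] (ι → ℝ) →L[ℝ] ℝ) (x y : ι → ℝ) :
    B x y = x ⬝ᵥ (of fun a b => B (Pi.single a 1) (Pi.single b 1)) *ᵥ y := by
  rw [← B.sum_smul_apply_single x]
  simp [← (B _).sum_smul_apply_single y, dotProduct, mulVec, Finset.mul_sum, mul_comm]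

theorem ContinuousLinearMap.sum_mul_apply_mulVec_mulVec (B : (ι → ℝ) →L[ℝ] (ι → ℝ) →L[ℝ] ℝ)
    (A D : Matrix ι ι ℝ) :
    ∑ i, ∑ j, D i j * B (A *ᵥ Pi.single j 1) (A *ᵥ Pi.single i 1) =
      ∑ i, ∑ j, (A * D * Aᵀ) i j * B (Pi.single j 1) (Pi.single i 1) := by
  set H : Matrix ι ι ℝ := of fun a b => B (Pi.single a 1) (Pi.single b 1)
  have hB : ∀ i j, B (A *ᵥ Pi.single j 1) (A *ᵥ Pi.single i 1) = (Aᵀ * H * A) j i := by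
    intro i j
    rw [B.apply_apply_eq_dotProduct_mulVec, mul_mul_apply, mulVec_single_one, mulVec_single_one]
    rfl
  simp_rw [hB]
  change _ = ∑ i, ∑ j, (A * D * Aᵀ) i j * H j i
  rw [Matrix.sum_sum_mul_apply_eq_trace, Matrix.sum_sum_mul_apply_eq_trace, ← Matrix.mul_assoc,
    ← Matrix.mul_assoc, trace_mul_comm]
  simp only [Matrix.mul_assoc]

end Contraction

section Flatten

theorem pd_pd_eq_fderiv_fderiv {d : ℕ} {h : (Fin d → ℝ) → ℝ} {x : Fin d → ℝ}
    (hh : DifferentiableAt ℝ (fderiv ℝ h) x) (i j : Fin d) :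
    pd (pd h i) j x = fderiv ℝ (fderiv ℝ h) x (Pi.single j 1) (Pi.single i 1) :=
  fderiv_fderiv_apply hh _ _

variable {n : ℕ}

theorem Fin.init_single_castSucc {α : Type*} [Zero α] (i : Fin n) (x : α) :
    Fin.init (Pi.single i.castSucc x : Fin (n + 1) → α) = Pi.single i x := by
  ext k
  simp [Fin.init, Pi.single_apply]

theorem Fin.init_single_last {α : Type*} [Zero α] (x : α) :
    Fin.init (Pi.single (Fin.last n) x : Fin (n + 1) → α) = 0 := by
  ext k
  simp [Fin.init, (Fin.castSucc_lt_last k).ne]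

noncomputable def Fin.initCLM (n : ℕ) : (Fin (n + 1) → ℝ) →L[ℝ] (Fin n → ℝ) :=
  ContinuousLinearMap.pi fun i => ContinuousLinearMap.proj i.castSucc

@[simp] theorem Fin.coe_initCLM : ⇑(Fin.initCLM n) = Fin.init := rfl

theorem ContinuousLinearMap.apply_init_eq_dotProduct (L : (Fin n → ℝ) →L[ℝ] ℝ)
    (v : Fin (n + 1) → ℝ) : L (Fin.init v) = Fin.snoc (fun k => L (Pi.single k 1)) 0 ⬝ᵥ v := by
  rw [← L.sum_smul_apply_single]
  simp [dotProduct, Fin.sum_univ_castSucc, Fin.init, mul_comm]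

noncomputable def flattenJacobian (g1 : Fin n → ℝ) : Matrix (Fin (n + 1)) (Fin (n + 1)) ℝ :=
  1 - vecMulVec (Pi.single (Fin.last n) 1) (Fin.snoc g1 0)

theorem flattenJacobian_mulVec (g1 : Fin n → ℝ) (v : Fin (n + 1) → ℝ) :
    flattenJacobian g1 *ᵥ v = v - (Fin.snoc g1 0 ⬝ᵥ v) • Pi.single (Fin.last n) 1 := by
  simp [flattenJacobian, sub_mulVec, vecMulVec_mulVec]

variable {g : (Fin n → ℝ) → ℝ} {f : (Fin (n + 1) → ℝ) → ℝ}

theorem flatten_eq_shear (g : (Fin n → ℝ) → ℝ) :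
    flatten g = shear (g ∘ Fin.initCLM n) (Pi.single (Fin.last n) 1) := by
  ext z i
  by_cases h : i = Fin.last n <;> simp [flatten, shear, Function.update, h]

theorem ContDiff.flatten {k : WithTop ℕ∞} (hg : ContDiff ℝ k g) : ContDiff ℝ k (flatten g) :=
  flatten_eq_shear g ▸ (hg.comp (Fin.initCLM n).contDiff).shear

theorem fderiv_comp_flatten_apply {z : Fin (n + 1) → ℝ}
    (hf : DifferentiableAt ℝ f (flatten g z)) (hg : DifferentiableAt ℝ g (Fin.init z))
    (v : Fin (n + 1) → ℝ) :
    fderiv ℝ (f ∘ flatten g) z v = fderiv ℝ f (flatten g z)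
      (flattenJacobian (fun k => fderiv ℝ g (Fin.init z) (Pi.single k 1)) *ᵥ v) := by
  have hG : DifferentiableAt ℝ (g ∘ Fin.initCLM n) z :=
    hg.comp z (Fin.initCLM n).differentiableAt
  rw [flatten_eq_shear] at hf ⊢
  rw [fderiv_comp_shear_apply hf hG, fderiv_comp_clm_apply _ hg, flattenJacobian_mulVec,
    ← ContinuousLinearMap.apply_init_eq_dotProduct]
  rfl

theorem fderiv_fderiv_comp_flatten_apply (hf : ContDiff ℝ 2 f) (hg : ContDiff ℝ 2 g)
    (z u v : Fin (n + 1) → ℝ) :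
    fderiv ℝ (fderiv ℝ (f ∘ flatten g)) z u v =
      fderiv ℝ (fderiv ℝ f) (flatten g z)
          (flattenJacobian (fun k => fderiv ℝ g (Fin.init z) (Pi.single k 1)) *ᵥ u)
          (flattenJacobian (fun k => fderiv ℝ g (Fin.init z) (Pi.single k 1)) *ᵥ v)
        - fderiv ℝ (fderiv ℝ g) (Fin.init z) (Fin.init u) (Fin.init v)
          * fderiv ℝ f (flatten g z) (Pi.single (Fin.last n) 1) := by
  have hG : ContDiff ℝ 2 (g ∘ Fin.initCLM n) := hg.comp (Fin.initCLM n).contDiff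
  have hg1 := hg.differentiable two_ne_zero (Fin.init z)
  rw [flatten_eq_shear, fderiv_fderiv_comp_shear_apply hf hG, fderiv_fderiv_comp_clm_apply hg,
    fderiv_comp_clm_apply _ hg1, fderiv_comp_clm_apply _ hg1, flattenJacobian_mulVec,
    flattenJacobian_mulVec, ← ContinuousLinearMap.apply_init_eq_dotProduct,
    ← ContinuousLinearMap.apply_init_eq_dotProduct, smul_eq_mul]
  rfl

end Flatten

section Coefficients

variable {n : ℕ}

theorem muHat_eq (μ : Fin (n + 1) → ℝ) (D : Matrix (Fin (n + 1)) (Fin (n + 1)) ℝ)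
    (g1 : Fin n → ℝ) (g2 : Fin n → Fin n → ℝ) :
    muHat μ D g1 g2 = flattenJacobian g1 *ᵥ μ
      - ((1 / 2) * ∑ j : Fin n, ∑ k : Fin n, D j.castSucc k.castSucc * g2 j k)
        • Pi.single (Fin.last n) 1 := by
  ext i
  rw [flattenJacobian_mulVec]
  induction i using Fin.lastCases with
  | last => simp [muHat, dotProduct, Fin.sum_univ_castSucc, mul_comm]
  | cast i => simp [muHat, (Fin.castSucc_lt_last i).ne]

theorem DHat_eq {D : Matrix (Fin (n + 1)) (Fin (n + 1)) ℝ} (hD : D.IsSymm) (g1 : Fin n → ℝ) :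
    DHat D g1 = flattenJacobian g1 * D * (flattenJacobian g1)ᵀ := by
  ext i j
  induction i using Fin.lastCases <;> induction j using Fin.lastCases <;>
    simp [DHat, flattenJacobian, Matrix.sub_mul, Matrix.mul_sub, vecMulVec_mul, mul_vecMulVec,
      (Fin.castSucc_lt_last _).ne, vecMulVec_apply, dotProduct, mulVec, vecMul,
      Fin.sum_univ_castSucc, Finset.mul_sum, hD.apply _ (Fin.last n)]
  case last.last =>
    have hquad : ∑ l, (D l.castSucc (Fin.last n) - ∑ k, g1 k * D k.castSucc l.castSucc) * g1 l =
        ∑ l, D l.castSucc (Fin.last n) * g1 l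
          - ∑ k, ∑ l, D k.castSucc l.castSucc * g1 k * g1 l := by
      simp only [sub_mul, Finset.sum_sub_distrib, Finset.sum_mul]
      rw [Finset.sum_comm (f := fun k l => D k.castSucc l.castSucc * g1 k * g1 l)]
      simp only [mul_comm (g1 _) (D _ _)]
    have hlin : ∑ k, 2 * (D k.castSucc (Fin.last n) * g1 k) =
        ∑ k, g1 k * D k.castSucc (Fin.last n) + ∑ k, D k.castSucc (Fin.last n) * g1 k := by
      rw [← Finset.sum_add_distrib]
      exact Finset.sum_congr rfl fun k _ => by ring
    linarith
  case last.cast k =>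
    exact Finset.sum_congr rfl fun l _ => by rw [hD.apply l.castSucc, mul_comm]

theorem ContinuousLinearMap.sum_mul_apply_init_single
    (B : (Fin n → ℝ) →L[ℝ] (Fin n → ℝ) →L[ℝ] ℝ) (D : Matrix (Fin (n + 1)) (Fin (n + 1)) ℝ) :
    ∑ i, ∑ j, D i j * B (Fin.init (Pi.single j 1 : Fin (n + 1) → ℝ))
      (Fin.init (Pi.single i 1 : Fin (n + 1) → ℝ)) =
      ∑ k : Fin n, ∑ l : Fin n, D k.castSucc l.castSucc * B (Pi.single l 1) (Pi.single k 1) := by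
  simp [Fin.sum_univ_castSucc, Fin.init_single_castSucc, Fin.init_single_last]

end Coefficients

theorem generator_flattening_change_of_coordinates_general (n : ℕ)
    (g : (Fin n → ℝ) → ℝ) (hg : ContDiff ℝ 2 g)
    (z μ : Fin (n + 1) → ℝ) (D : Matrix (Fin (n + 1)) (Fin (n + 1)) ℝ) (hD : D.IsSymm)
    (f : (Fin (n + 1) → ℝ) → ℝ) (hf : ContDiff ℝ 2 f) :
    (∑ i, μ i * pd (f ∘ flatten g) i z)
        + (1 / 2) * ∑ i, ∑ j, D i j * pd (pd (f ∘ flatten g) i) j z =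
      (∑ i, muHat μ D
            (fun k => fderiv ℝ g (Fin.init z) (Pi.single k 1))
            (fun k l => fderiv ℝ (fun v => fderiv ℝ g v (Pi.single k 1)) (Fin.init z)
              (Pi.single l 1)) i
          * pd f i (flatten g z))
        + (1 / 2) * ∑ i, ∑ j, DHat D
            (fun k => fderiv ℝ g (Fin.init z) (Pi.single k 1)) i j
          * pd (pd f i) j (flatten g z) := by
  simp only [pd_pd_eq_fderiv_fderiv ((hf.comp hg.flatten).differentiable_fderiv _),
    pd_pd_eq_fderiv_fderiv (hf.differentiable_fderiv _)]
  simp only [pd, fderiv_fderiv_apply (hg.differentiable_fderiv _),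
    fderiv_comp_flatten_apply (hf.differentiable two_ne_zero _) (hg.differentiable two_ne_zero _),
    fderiv_fderiv_comp_flatten_apply hf hg, muHat_eq, DHat_eq hD]
  set A := flattenJacobian (fun k => fderiv ℝ g (Fin.init z) (Pi.single k 1))
  set L := fderiv ℝ f (flatten g z)
  have hdrift : ∑ i, μ i * L (A *ᵥ Pi.single i 1) = L (A *ᵥ μ) :=
    L.sum_smul_apply_mulVec_single A μ
  have hcoord : ∀ w, ∑ i, w i * L (Pi.single i 1) = L w := L.sum_smul_apply_single
  have hcurv : ∀ c : ℝ, ∑ i, ∑ j, D i j * (fderiv ℝ (fderiv ℝ g) (Fin.init z)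
      (Fin.init (Pi.single j 1 : Fin (n + 1) → ℝ)) (Fin.init (Pi.single i 1 : Fin (n + 1) → ℝ)) * c)
      = (∑ k : Fin n, ∑ l : Fin n, D k.castSucc l.castSucc
          * fderiv ℝ (fderiv ℝ g) (Fin.init z) (Pi.single l 1) (Pi.single k 1)) * c := fun c => by
    simp only [← mul_assoc, ← Finset.sum_mul, ContinuousLinearMap.sum_mul_apply_init_single]
  rw [hdrift, hcoord]
  simp only [mul_sub, Finset.sum_sub_distrib, ContinuousLinearMap.sum_mul_apply_mulVec_mulVec,
    hcurv, map_sub, map_smul, smul_eq_mul]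
  ring

/-- Under the flattening change of coordinates `Φ(v, y) = (v, y − g(v))`, the backward
Kolmogorov operator with coefficients `μ, D` applied to `f ∘ Φ` at `z` equals the operator
with the transformed coefficients `μ̂, D̂` applied to `f` at `Φ(z)`. -/
theorem generator_flattening_change_of_coordinates (n : ℕ) (hn : 1 ≤ n)
    (g : (Fin n → ℝ) → ℝ) (hg : ContDiff ℝ 2 g)
    (z μ : Fin (n + 1) → ℝ) (D : Matrix (Fin (n + 1)) (Fin (n + 1)) ℝ) (hD : D.IsSymm)
    (f : (Fin (n + 1) → ℝ) → ℝ) (hf : ContDiff ℝ 2 f) :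
    (∑ i, μ i * pd (f ∘ flatten g) i z)
        + (1 / 2) * ∑ i, ∑ j, D i j * pd (pd (f ∘ flatten g) i) j z =
      (∑ i, muHat μ D
            (fun k => fderiv ℝ g (Fin.init z) (Pi.single k 1))
            (fun k l => fderiv ℝ (fun v => fderiv ℝ g v (Pi.single k 1)) (Fin.init z)
              (Pi.single l 1)) i
          * pd f i (flatten g z))
        + (1 / 2) * ∑ i, ∑ j, DHat D
            (fun k => fderiv ℝ g (Fin.init z) (Pi.single k 1)) i j
          * pd (pd f i) j (flatten g z) :=
  generator_flattening_change_of_coordinates_general n g hg z μ D hD f hf
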